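/- For entropic indices in the region D = ℝ₊² \ {(α,β) : α > 1/2, β > α̃}, the uncertainty relation N_α(A)·N_β(Ã) ≥ B_{α,β} holds for all unit-norm Ψ ∈ L²(ℝ^d), where B_{α,β} = B(max(α,β)) if max(α,β) ≥ 1/2 and B_{α,β} = 2π if both α, β < 1/2. (It suffices to prove: if the conjugated-index inequality N_α·N_{α̃} ≥ B(α) holds for all α ≥ 1/2, then monotonicity of N_λ in λ extends it to all of D.) -/

import Mathlib

/-!
Since the entropy powers decrease in the index, a bound at `(a, b)` gives the same bound at every
`(α, β) ≤ (a, b)`. A point of `D` with `max(α, β) > 1/2` lies below a point `(α, α̃)` or `(β̃, β)`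
of the conjugate curve, where `B(α̃) = B(α)`; a point with both indices `≤ 1/2` lies below
`(1, 1)`, and `B(1) = eπ ≥ 2π`.
-/

open Set

/-- The bound `B(α)` of the conjugated-index entropic uncertainty relation,
extended by continuity with `B(1) = eπ` and `B(α) = 2π` for `α ≤ 1/2`. -/
noncomputable def Bext (α : ℝ) : ℝ :=
  if α ≤ 1/2 then 2 * Real.pi
  else if α = 1 then Real.exp 1 * Real.pi
  else Real.pi * α ^ (1/(2*(α-1))) * (α / (2*α - 1)) ^ (1/(2*(α / (2*α - 1) - 1)))

noncomputable def conjIndex (l : ℝ) : ℝ := l / (2 * l - 1)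

lemma one_half_lt_conjIndex {l : ℝ} (hl : 1 / 2 < l) : 1 / 2 < conjIndex l := by
  rw [conjIndex, lt_div_iff₀ (by linarith)]
  linarith

lemma conjIndex_conjIndex {l : ℝ} (hl : 1 / 2 < l) : conjIndex (conjIndex l) = l := by
  have hl' : 2 * l - 1 ≠ 0 := by linarith
  have hden : 2 * (l / (2 * l - 1)) - 1 = 1 / (2 * l - 1) := by
    field_simp
    ring
  rw [conjIndex, conjIndex, hden, div_div_eq_mul_div, div_one, div_mul_cancel₀ l hl']

lemma conjIndex_one : conjIndex 1 = 1 := by norm_num [conjIndex]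

lemma le_conjIndex_iff {α β : ℝ} (hα : 1 / 2 < α) :
    β ≤ conjIndex α ↔ 2 * α * β ≤ α + β := by
  rw [conjIndex, le_div_iff₀ (by linarith)]
  constructor <;> intro h <;> linarith

lemma le_conjIndex_comm {α β : ℝ} (hα : 1 / 2 < α) (hβ : 1 / 2 < β) :
    β ≤ conjIndex α ↔ α ≤ conjIndex β := by
  rw [le_conjIndex_iff hα, le_conjIndex_iff hβ, mul_right_comm, add_comm]

lemma Bext_conjIndex {l : ℝ} (hl : 1 / 2 < l) : Bext (conjIndex l) = Bext l := by
  rcases eq_or_ne l 1 with rfl | hl1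
  · rw [conjIndex_one]
  have hl' : conjIndex l ≠ 1 := fun h =>
    hl1 (by rw [← conjIndex_conjIndex hl, h, conjIndex_one])
  unfold Bext
  rw [if_neg (one_half_lt_conjIndex hl).not_ge, if_neg hl', if_neg hl.not_ge, if_neg hl1]
  rw [← conjIndex, ← conjIndex, conjIndex_conjIndex hl]
  ring

lemma Bext_le_Bext_one {α : ℝ} (hα : α ≤ 1 / 2) : Bext α ≤ Bext 1 := by
  have h2e : (2 : ℝ) ≤ Real.exp 1 := by linarith [Real.add_one_le_exp 1]
  rw [Bext, Bext, if_pos hα, if_neg (by norm_num), if_pos rfl]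
  exact mul_le_mul_of_nonneg_right h2e Real.pi_pos.le

lemma mul_le_mul_of_antitoneOn {f g : ℝ → ℝ}
    (hf₀ : ∀ x, 0 ≤ f x) (hg₀ : ∀ x, 0 ≤ g x) (hf : AntitoneOn f (Ici 0))
    (hg : AntitoneOn g (Ici 0)) {a a' b b' : ℝ}
    (ha' : 0 ≤ a') (hb' : 0 ≤ b') (ha : a' ≤ a) (hb : b' ≤ b) :
    f a * g b ≤ f a' * g b' :=
  mul_le_mul (hf ha' (ha'.trans ha) ha) (hg hb' (hb'.trans hb) hb) (hg₀ b) (hf₀ a')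

/-- If the conjugated-index inequality `N_α(A)·N_{α̃}(Ã) ≥ B(α)` holds and the
entropy powers are positive and non-increasing in the index, then for every
`(α,β)` in the region `D = ℝ₊² \ {α > 1/2 ∧ β > α̃}` the uncertainty relation
`N_α(A)·N_β(Ã) ≥ B_{α,β}` holds, with `B_{α,β} = B(max(α,β))` (which equals
`2π` when both `α, β < 1/2`). -/
theorem entropic_uncertainty_on_D (NA NB : ℝ → ℝ)
    (hNApos : ∀ l, 0 < NA l) (hNBpos : ∀ l, 0 < NB l)
    (hNAmono : AntitoneOn NA (Set.Ici 0)) (hNBmono : AntitoneOn NB (Set.Ici 0))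
    (hconj : ∀ l, 1/2 < l → Bext l ≤ NA l * NB (l / (2*l - 1)))
    (α β : ℝ) (hα : 0 ≤ α) (hβ : 0 ≤ β)
    (hD : ¬ (1/2 < α ∧ α / (2*α - 1) < β)) :
    Bext (max α β) ≤ NA α * NB β := by
  replace hconj : ∀ l, 1 / 2 < l → Bext l ≤ NA l * NB (conjIndex l) := hconj
  replace hD : 1 / 2 < α → β ≤ conjIndex α := fun h => not_lt.1 fun h' => hD ⟨h, h'⟩
  have hmono {a b : ℝ} (ha : α ≤ a) (hb : β ≤ b) : NA a * NB b ≤ NA α * NB β :=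
    mul_le_mul_of_antitoneOn (fun l => (hNApos l).le) (fun l => (hNBpos l).le) hNAmono hNBmono
      hα hβ ha hb
  rcases le_or_gt (max α β) (1 / 2) with hm | hm
  · have hle_one : ∀ {x}, x ≤ max α β → x ≤ 1 := fun hx => by linarith
    calc Bext (max α β) ≤ Bext 1 := Bext_le_Bext_one hm
      _ ≤ NA 1 * NB 1 := by simpa only [conjIndex_one] using hconj 1 (by norm_num)
      _ ≤ NA α * NB β := hmono (hle_one (le_max_left α β)) (hle_one (le_max_right α β))
  rcases le_total β α with hab | hab
  · rw [max_eq_left hab] at hm ⊢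
    exact (hconj α hm).trans (hmono le_rfl (hD hm))
  · rw [max_eq_right hab] at hm ⊢
    have hαβ : α ≤ conjIndex β := by
      rcases le_or_gt α (1 / 2) with hα' | hα'
      · exact hα'.trans (one_half_lt_conjIndex hm).le
      · exact (le_conjIndex_comm hα' hm).1 (hD hα')
    calc Bext β = Bext (conjIndex β) := (Bext_conjIndex hm).symm
      _ ≤ NA (conjIndex β) * NB β := by
        simpa only [conjIndex_conjIndex hm] using hconj _ (one_half_lt_conjIndex hm)
      _ ≤ NA α * NB β := hmono hαβ le_rfl
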